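/- Let F be an anonymous voting method satisfying a variable candidate universal axiom Ax. Then for any finite Y ⊆ 𝒳 and m ∈ ℤ⁺, the majoritarian projection F_{maj,Y} and the pairwise projection F_{pair,Y,m} satisfy Ax. -/

import Mathlib

/- Formalization of the profile representation of (weighted) weak tournaments from
Holliday, Norman, Pacuit, Zahedian, "Impossibility theorems involving weakenings of
expansion consistency and resoluteness in voting". Candidates form an infinite
type `C`. -/

open Classical

noncomputable section

/-- `L` is a strict linear order on exactly the finite set `s`. -/
def IsStrictLinearOrderOn {C : Type} (s : Finset C) (L : C → C → Prop) : Prop :=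
  (∀ x, ¬ L x x) ∧ (∀ x y z, L x y → L y z → L x z) ∧
    (∀ x ∈ s, ∀ y ∈ s, x ≠ y → L x y ∨ L y x) ∧ ∀ x y, L x y → x ∈ s ∧ y ∈ s

/-- Restriction of a relation to a finite set `A`. -/
def restrictRel {C : Type} (A : Finset C) (L : C → C → Prop) : C → C → Prop :=
  fun x y => L x y ∧ x ∈ A ∧ y ∈ A

theorem IsStrictLinearOrderOn.restrict {C : Type} {s A : Finset C} {L : C → C → Prop}
    (h : IsStrictLinearOrderOn s L) (hA : A ⊆ s) :
    IsStrictLinearOrderOn A (restrictRel A L) := by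
  obtain ⟨hirr, htr, htot, hdom⟩ := h
  refine ⟨fun x hx => hirr x hx.1,
    fun x y z hxy hyz => ⟨htr _ _ _ hxy.1 hyz.1, hxy.2.1, hyz.2.2⟩, ?_,
    fun x y hxy => ⟨hxy.2.1, hxy.2.2⟩⟩
  intro x hx y hy hne
  rcases htot x (hA hx) y (hA hy) hne with h' | h'
  · exact Or.inl ⟨h', hx, hy⟩
  · exact Or.inr ⟨h', hy, hx⟩

/-- The image of a relation under the transposition of `a` and `b`:
`(x, y) ∈ swapRel a b L` iff `(π x, π y) ∈ L` where `π` swaps `a` and `b`. -/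
def swapRel {C : Type} (a b : C) (L : C → C → Prop) : C → C → Prop :=
  fun x y => L (Equiv.swap a b x) (Equiv.swap a b y)

theorem IsStrictLinearOrderOn.swapRel_mem {C : Type} {s : Finset C} {L : C → C → Prop}
    (a b : C) (h : IsStrictLinearOrderOn s L) :
    IsStrictLinearOrderOn (s.image (Equiv.swap a b)) (swapRel a b L) := by
  obtain ⟨hirr, htr, htot, hdom⟩ := h
  refine ⟨fun x => hirr _, fun x y z hxy hyz => htr _ _ _ hxy hyz, ?_, ?_⟩
  · intro x hx y hy hne
    obtain ⟨x', hx', rfl⟩ := Finset.mem_image.mp hx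
    obtain ⟨y', hy', rfl⟩ := Finset.mem_image.mp hy
    have hne' : x' ≠ y' := by rintro rfl; exact hne rfl
    have := htot x' hx' y' hy' hne'
    simpa [swapRel, Equiv.swap_apply_self] using this
  · intro x y hxy
    obtain ⟨h1, h2⟩ := hdom _ _ hxy
    exact ⟨Finset.mem_image.mpr ⟨_, h1, Equiv.swap_apply_self a b x⟩,
      Finset.mem_image.mpr ⟨_, h2, Equiv.swap_apply_self a b y⟩⟩

theorem IsStrictLinearOrderOn.of_swapRel {C : Type} {s : Finset C} {L : C → C → Prop}
    {a b : C} (h : IsStrictLinearOrderOn s (swapRel a b L)) :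
    IsStrictLinearOrderOn (s.image (Equiv.swap a b)) L := by
  have h2 := h.swapRel_mem a b
  have heq : swapRel a b (swapRel a b L) = L := by
    funext x y
    simp [swapRel, Equiv.swap_apply_self]
  rwa [heq] at h2

/-- A generalized anonymous profile: an integer-valued function on the strict linear
orders of a finite nonempty set of candidates (encoded as a function on all
relations, supported on the strict linear orders of `cands`). -/
structure GAProfile (C : Type) where
  cands : Finset C
  cands_nonempty : cands.Nonempty
  count : (C → C → Prop) → ℤ
  count_supp : ∀ L, count L ≠ 0 → IsStrictLinearOrderOn cands L

namespace GAProfile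

variable {C : Type}

/-- `P` is an anonymous profile: all ballot counts are nonnegative. -/
def IsAnon (P : GAProfile C) : Prop := ∀ L, 0 ≤ P.count L

/-- The margin `μ_{x,y}(P)` of `x` over `y` in `P`. -/
def margin (P : GAProfile C) (x y : C) : ℤ :=
  (∑ᶠ L : C → C → Prop, if L x y then P.count L else 0) -
    ∑ᶠ L : C → C → Prop, if L y x then P.count L else 0

theorem margin_neg (P : GAProfile C) (x y : C) : P.margin y x = - P.margin x y := by
  simp only [margin]
  ring

/-- The restriction `P|_Z` of a generalized anonymous profile to a nonempty subset
`Z` of its candidates. -/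
def restrict (P : GAProfile C) (Z : Finset C) (hZ : Z.Nonempty) (hsub : Z ⊆ P.cands) :
    GAProfile C where
  cands := Z
  cands_nonempty := hZ
  count := fun L => ∑ᶠ L' : C → C → Prop, if restrictRel Z L' = L then P.count L' else 0
  count_supp := by
    intro L hL
    by_contra hnot
    apply hL
    apply finsum_eq_zero_of_forall_eq_zero
    intro L'
    split_ifs with h
    · by_contra hc
      exact hnot (h ▸ ((P.count_supp L' hc).restrict hsub))
    · rfl

/-- The profile `P_{a⇄b}` obtained by transposing the candidates `a` and `b`. -/
def swapCands (P : GAProfile C) (a b : C) : GAProfile C where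
  cands := P.cands.image (Equiv.swap a b)
  cands_nonempty := P.cands_nonempty.image _
  count := fun L => P.count (swapRel a b L)
  count_supp := fun L h => (P.count_supp _ h).of_swapRel

end GAProfile

/-- A weak tournament: an asymmetric directed graph on a finite nonempty set of
vertices. -/
structure WeakTournament (C : Type) where
  verts : Finset C
  verts_nonempty : verts.Nonempty
  edge : C → C → Prop
  edge_asymm : ∀ x y, edge x y → ¬ edge y x
  edge_dom : ∀ x y, edge x y → x ∈ verts ∧ y ∈ verts

/-- A weighted weak tournament: a weak tournament together with a positive integer
weight on each edge (normalized to weight `0` off the edges). -/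
structure WeightedWeakTournament (C : Type) where
  verts : Finset C
  verts_nonempty : verts.Nonempty
  edge : C → C → Prop
  edge_asymm : ∀ x y, edge x y → ¬ edge y x
  edge_dom : ∀ x y, edge x y → x ∈ verts ∧ y ∈ verts
  wt : C → C → ℤ
  wt_pos : ∀ x y, edge x y → 0 < wt x y
  wt_eq_zero : ∀ x y, ¬ edge x y → wt x y = 0

namespace GAProfile

variable {C : Type}

/-- The majority graph `M(P)` of a generalized anonymous profile. -/
def maj (P : GAProfile C) : WeakTournament C where
  verts := P.cands
  verts_nonempty := P.cands_nonempty
  edge := fun x y => 0 < P.margin x y ∧ x ∈ P.cands ∧ y ∈ P.cands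
  edge_asymm := by
    intro x y h h'
    have hneg := P.margin_neg x y
    have h1 := h.1
    have h2 := h'.1
    omega
  edge_dom := fun x y h => ⟨h.2.1, h.2.2⟩

/-- The margin graph `ℳ(P)` of a generalized anonymous profile. -/
def marg (P : GAProfile C) : WeightedWeakTournament C where
  verts := P.cands
  verts_nonempty := P.cands_nonempty
  edge := fun x y => 0 < P.margin x y ∧ x ∈ P.cands ∧ y ∈ P.cands
  edge_asymm := by
    intro x y h h'
    have hneg := P.margin_neg x y
    have h1 := h.1
    have h2 := h'.1
    omega
  edge_dom := fun x y h => ⟨h.2.1, h.2.2⟩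
  wt := fun x y =>
    if 0 < P.margin x y ∧ x ∈ P.cands ∧ y ∈ P.cands then P.margin x y else 0
  wt_pos := by
    intro x y h
    show 0 < if 0 < P.margin x y ∧ x ∈ P.cands ∧ y ∈ P.cands then P.margin x y else 0
    rw [if_pos h]
    exact h.1
  wt_eq_zero := by
    intro x y h
    show (if 0 < P.margin x y ∧ x ∈ P.cands ∧ y ∈ P.cands then P.margin x y else 0) = 0
    exact if_neg h

end GAProfile

/-- The number `ψ_Y = 2 (|Y| − 2)!`. -/
def psi {C : Type} (Y : Finset C) : ℤ := 2 * ((Y.card - 2).factorial : ℤ)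

theorem psi_pos {C : Type} (Y : Finset C) : 0 < psi Y := by
  have h := Nat.factorial_pos (Y.card - 2)
  simp only [psi]
  omega

/-- The count function of the profile `𝐋_Y` consisting of one copy of each linear
order of `Y`. -/
def allOrdersCount {C : Type} (Y : Finset C) (L : C → C → Prop) : ℤ :=
  if IsStrictLinearOrderOn Y L then 1 else 0

/-- `L` ranks `a` first and `b` second among the candidates in `Y`. -/
def firstSecond {C : Type} (Y : Finset C) (a b : C) (L : C → C → Prop) : Prop :=
  (∀ z ∈ Y, z ≠ a → L a z) ∧ ∀ z ∈ Y, z ≠ a → z ≠ b → L b z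

/-- The count function of the `ab`-`Y`-block `𝐋_{ab-Y}`: one copy of each linear
order of `Y` with `a` first and `b` second. -/
def blockCount {C : Type} (Y : Finset C) (a b : C) (L : C → C → Prop) : ℤ :=
  if IsStrictLinearOrderOn Y L ∧ firstSecond Y a b L then 1 else 0

/-- The count function of the profile
`𝔏_Y(T) = 𝐋_Y + Σ_{a→b in T} (𝐋_{ab-Y} − 𝐋_{ba-Y})`. -/
def bigLCount {C : Type} (Y : Finset C) (T : WeakTournament C) : (C → C → Prop) → ℤ :=
  fun L => allOrdersCount Y L +
    ∑ p ∈ T.verts ×ˢ T.verts,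
      (if T.edge p.1 p.2 then blockCount Y p.1 p.2 L - blockCount Y p.2 p.1 L else 0)

/-- The profile `𝔏_Y(T)`. -/
def bigL {C : Type} (Y : Finset C) (T : WeakTournament C) (hsub : T.verts ⊆ Y) :
    GAProfile C where
  cands := Y
  cands_nonempty := by
    obtain ⟨x, hx⟩ := T.verts_nonempty
    exact ⟨x, hsub hx⟩
  count := bigLCount Y T
  count_supp := by
    intro L hL
    by_contra h
    apply hL
    have hb : ∀ a b : C, blockCount Y a b L = 0 := by
      intro a b
      exact if_neg (by exact fun hc => h hc.1)
    simp only [bigLCount, allOrdersCount, if_neg h, zero_add]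
    refine Finset.sum_eq_zero fun p _ => ?_
    rw [hb, hb, sub_self]
    split <;> rfl

/-- The profile representation `𝔓_Y(T) = 𝔏_Y(T)|_{X(T)}` of a weak tournament `T`
relative to `Y`. -/
def profileRep {C : Type} (Y : Finset C) (T : WeakTournament C) (hsub : T.verts ⊆ Y) :
    GAProfile C :=
  (bigL Y T hsub).restrict T.verts T.verts_nonempty hsub

/-- The count function of the profile
`𝔏_{Y,m}(𝒯) = m𝐋_Y + Σ_{a→b in 𝒯 with weight kψ_Y} (k𝐋_{ab-Y} − k𝐋_{ba-Y})`. -/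
def bigLWCount {C : Type} (Y : Finset C) (m : ℕ) (T : WeightedWeakTournament C) :
    (C → C → Prop) → ℤ :=
  fun L => (m : ℤ) * allOrdersCount Y L +
    ∑ p ∈ T.verts ×ˢ T.verts,
      (if T.edge p.1 p.2 then
        (T.wt p.1 p.2 / psi Y) * (blockCount Y p.1 p.2 L - blockCount Y p.2 p.1 L)
      else 0)

/-- The profile `𝔏_{Y,m}(𝒯)`. -/
def bigLW {C : Type} (Y : Finset C) (m : ℕ) (T : WeightedWeakTournament C)
    (hsub : T.verts ⊆ Y) : GAProfile C where
  cands := Y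
  cands_nonempty := by
    obtain ⟨x, hx⟩ := T.verts_nonempty
    exact ⟨x, hsub hx⟩
  count := bigLWCount Y m T
  count_supp := by
    intro L hL
    by_contra h
    apply hL
    have hb : ∀ a b : C, blockCount Y a b L = 0 := by
      intro a b
      exact if_neg (by exact fun hc => h hc.1)
    simp only [bigLWCount, allOrdersCount, if_neg h, mul_zero, zero_add]
    refine Finset.sum_eq_zero fun p _ => ?_
    rw [hb, hb, sub_self, mul_zero]
    split <;> rfl

/-- The profile representation `𝔓_{Y,m}(𝒯) = 𝔏_{Y,m}(𝒯)|_{X(𝒯)}` of a weighted weak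
tournament `𝒯` relative to `Y` and `m`. -/
def profileRepW {C : Type} (Y : Finset C) (m : ℕ) (T : WeightedWeakTournament C)
    (hsub : T.verts ⊆ Y) : GAProfile C :=
  (bigLW Y m T hsub).restrict T.verts T.verts_nonempty hsub

/-- Membership in `𝕎𝕋^w_{Y,m}`: a weighted weak tournament on vertices included in
`Y`, each of whose weights is `kψ_Y` for some positive `k ≤ m`. -/
def MemWTw {C : Type} (Y : Finset C) (m : ℕ) (T : WeightedWeakTournament C) : Prop :=
  T.verts ⊆ Y ∧
    ∀ a b, T.edge a b → ∃ k : ℕ, 0 < k ∧ k ≤ m ∧ T.wt a b = (k : ℤ) * psi Y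

/-- The weighted weak tournament obtained by multiplying all weights by `n > 0`. -/
def WeightedWeakTournament.scale {C : Type} (n : ℤ) (hn : 0 < n)
    (T : WeightedWeakTournament C) : WeightedWeakTournament C where
  verts := T.verts
  verts_nonempty := T.verts_nonempty
  edge := T.edge
  edge_asymm := T.edge_asymm
  edge_dom := T.edge_dom
  wt := fun x y => n * T.wt x y
  wt_pos := fun x y h => mul_pos hn (T.wt_pos x y h)
  wt_eq_zero := fun x y h => by
    show n * T.wt x y = 0
    rw [T.wt_eq_zero x y h, mul_zero]

/-- An anonymous voting method: a function on a set of anonymous profiles assigning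
to each profile in its domain a nonempty set of winners among its candidates. -/
structure AnonVotingMethod (C : Type) where
  dom : Set (GAProfile C)
  dom_anon : ∀ P ∈ dom, P.IsAnon
  winners : GAProfile C → Finset C
  winners_nonempty : ∀ P ∈ dom, (winners P).Nonempty
  winners_sub : ∀ P ∈ dom, winners P ⊆ P.cands

namespace AnonVotingMethod

variable {C : Type}

/-- Majoritarianism: the winners depend only on the majority graph. -/
def Majoritarian (F : AnonVotingMethod C) : Prop :=
  ∀ P ∈ F.dom, ∀ P' ∈ F.dom, P.maj = P'.maj → F.winners P = F.winners P'

/-- Pairwiseness: the winners depend only on the margin graph. -/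
def Pairwise (F : AnonVotingMethod C) : Prop :=
  ∀ P ∈ F.dom, ∀ P' ∈ F.dom, P.marg = P'.marg → F.winners P = F.winners P'

/-- Neutrality: transposing two candidates transposes the winners accordingly. -/
def Neutral (F : AnonVotingMethod C) : Prop :=
  ∀ P ∈ F.dom, ∀ a b : C, P.swapCands a b ∈ F.dom →
    F.winners (P.swapCands a b) = (F.winners P).image (Equiv.swap a b)

end AnonVotingMethod

/-- The majoritarian projection `F_{maj,Y}` of an anonymous voting method `F`:
its domain consists of the anonymous profiles `P` with `X(P) ⊆ Y` and
`𝔓_Y(M(P)) ∈ dom(F)`, and `F_{maj,Y}(P) = F(𝔓_Y(M(P)))`. -/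
def majProj {C : Type} (F : AnonVotingMethod C) (Y : Finset C) : AnonVotingMethod C where
  dom := {P | P.IsAnon ∧ ∃ h : P.maj.verts ⊆ Y, profileRep Y P.maj h ∈ F.dom}
  dom_anon := fun _ hP => hP.1
  winners := fun P =>
    if h : P.maj.verts ⊆ Y then F.winners (profileRep Y P.maj h) else P.cands
  winners_nonempty := by
    rintro P ⟨hA, h, hd⟩
    show (if h : P.maj.verts ⊆ Y then
      F.winners (profileRep Y P.maj h) else P.cands).Nonempty
    rw [dif_pos h]
    exact F.winners_nonempty _ hd
  winners_sub := by
    rintro P ⟨hA, h, hd⟩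
    show (if h : P.maj.verts ⊆ Y then
      F.winners (profileRep Y P.maj h) else P.cands) ⊆ P.cands
    rw [dif_pos h]
    exact F.winners_sub _ hd

/-- The pairwise projection `F_{pair,Y,m}` of an anonymous voting method `F`:
its domain consists of the anonymous profiles `P` with `X(P) ⊆ Y`, all weights in
`ℳ(P)` at most `m`, and `𝔓_{Y,m}(ψℳ(P)) ∈ dom(F)`, and
`F_{pair,Y,m}(P) = F(𝔓_{Y,m}(ψℳ(P)))`. -/
def pairProj {C : Type} (F : AnonVotingMethod C) (Y : Finset C) (m : ℕ) :
    AnonVotingMethod C where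
  dom := {P | P.IsAnon ∧ (∀ x ∈ P.cands, ∀ y ∈ P.cands, P.margin x y ≤ (m : ℤ)) ∧
    ∃ h : (WeightedWeakTournament.scale (psi Y) (psi_pos Y) P.marg).verts ⊆ Y,
      profileRepW Y m (WeightedWeakTournament.scale (psi Y) (psi_pos Y) P.marg) h ∈ F.dom}
  dom_anon := fun _ hP => hP.1
  winners := fun P =>
    if h : (WeightedWeakTournament.scale (psi Y) (psi_pos Y) P.marg).verts ⊆ Y then
      F.winners
        (profileRepW Y m (WeightedWeakTournament.scale (psi Y) (psi_pos Y) P.marg) h)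
    else P.cands
  winners_nonempty := by
    rintro P ⟨hA, hw, h, hd⟩
    show (if h : (WeightedWeakTournament.scale (psi Y) (psi_pos Y) P.marg).verts ⊆ Y then
      F.winners
        (profileRepW Y m (WeightedWeakTournament.scale (psi Y) (psi_pos Y) P.marg) h)
      else P.cands).Nonempty
    rw [dif_pos h]
    exact F.winners_nonempty _ hd
  winners_sub := by
    rintro P ⟨hA, hw, h, hd⟩
    show (if h : (WeightedWeakTournament.scale (psi Y) (psi_pos Y) P.marg).verts ⊆ Y then
      F.winners
        (profileRepW Y m (WeightedWeakTournament.scale (psi Y) (psi_pos Y) P.marg) h)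
      else P.cands) ⊆ P.cands
    rw [dif_pos h]
    exact F.winners_sub _ hd

/-- `F` satisfies the `n`-ary universal axiom `Ax`: every `n`-tuple of pairs
`⟨P, F(P)⟩` with `P` in the domain of `F` belongs to `Ax`. -/
def AnonVotingMethod.Satisfies {C : Type} (F : AnonVotingMethod C) {n : ℕ}
    (Ax : Set (Fin n → GAProfile C × Finset C)) : Prop :=
  ∀ f : Fin n → GAProfile C × Finset C,
    (∀ i, (f i).1 ∈ F.dom ∧ (f i).2 = F.winners (f i).1) → f ∈ Ax

/-- `Ax` is a majoritarian universal axiom: membership is invariant under replacing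
the profiles by profiles with the same majority graphs. -/
def IsMajoritarianAx {C : Type} {n : ℕ} (Ax : Set (Fin n → GAProfile C × Finset C)) :
    Prop :=
  ∀ Pv Qv : Fin n → GAProfile C, (∀ i, (Pv i).maj = (Qv i).maj) →
    ∀ Xv : Fin n → Finset C, (∀ i, Xv i ⊆ (Pv i).cands) →
      ((fun i => (Pv i, Xv i)) ∈ Ax ↔ (fun i => (Qv i, Xv i)) ∈ Ax)

/-- `Ax` is a homogeneously pairwise universal axiom: membership is invariant under
replacing the profiles by profiles whose margin graphs are a common positive multiple
of the original margin graphs. -/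
def IsHomogeneouslyPairwiseAx {C : Type} {n : ℕ}
    (Ax : Set (Fin n → GAProfile C × Finset C)) : Prop :=
  ∀ Pv Qv : Fin n → GAProfile C, ∀ k : ℤ, ∀ hk : 0 < k,
    (∀ i, WeightedWeakTournament.scale k hk (Pv i).marg = (Qv i).marg) →
    ∀ Xv : Fin n → Finset C, (∀ i, Xv i ⊆ (Pv i).cands) →
      ((fun i => (Pv i, Xv i)) ∈ Ax ↔ (fun i => (Qv i, Xv i)) ∈ Ax)

/-- `Ax` is a variable candidate universal axiom: if the `Qᵢ` have the same candidate
sets as the `Pᵢ` and are related by restriction in all the ways the `Pᵢ` are, then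
acceptable choices for the `Qᵢ` are acceptable choices for the `Pᵢ`. -/
def IsVariableCandidateAx {C : Type} {n : ℕ}
    (Ax : Set (Fin n → GAProfile C × Finset C)) : Prop :=
  ∀ Pv Qv : Fin n → GAProfile C,
    (∀ i, (Pv i).cands = (Qv i).cands) →
    (∀ i j, ∀ h1 : (Pv i).cands ⊆ (Pv j).cands,
      Pv i = (Pv j).restrict (Pv i).cands (Pv i).cands_nonempty h1 →
      ∀ h2 : (Qv i).cands ⊆ (Qv j).cands,
        Qv i = (Qv j).restrict (Qv i).cands (Qv i).cands_nonempty h2) →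
    ∀ Xv : Fin n → Finset C, (∀ i, Xv i ⊆ (Pv i).cands) →
      (fun i => (Qv i, Xv i)) ∈ Ax → (fun i => (Pv i, Xv i)) ∈ Ax

/-!
Restriction of profiles is linear in the ballot counts, and restricting the block difference
`𝐋_{ab-Y} − 𝐋_{ba-Y}` to a set `Z` that misses `a` or `b` gives zero: swapping `a` and `b` matches
the two blocks ballot by ballot without changing restrictions to `Z`. Hence `𝔏_Y(T)|_Z` and
`𝔏_{Y,m}(𝒯)|_Z` only depend on the edges (and weights) inside `Z`. Since margins commute with
restriction, the representatives `𝔓_Y(M(Pᵢ))` and `𝔓_{Y,m}(ψℳ(Pᵢ))` have the candidates of the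
`Pᵢ` and inherit every restriction relation among them, while the projection chooses on `Pᵢ`
what `F` chooses on its representative; the variable candidate axiom then carries membership in
`Ax` from the representatives back to the `Pᵢ`.
-/

section ProjectionsOfVariableCandidateAxioms

variable {C : Type}

theorem GAProfile.ext {P Q : GAProfile C} (hcands : P.cands = Q.cands)
    (hcount : P.count = Q.count) : P = Q := by
  cases P; cases Q
  cases hcands; cases hcount
  rfl

theorem finite_setOf_isStrictLinearOrderOn (W : Finset C) :
    {L : C → C → Prop | IsStrictLinearOrderOn W L}.Finite := by
  refine Set.Finite.of_finite_image (f := fun L (a b : W) => L a b) (Set.toFinite _) ?_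
  intro L hL L' hL' h
  funext x y
  by_cases hxy : x ∈ W ∧ y ∈ W
  · exact congrFun (congrFun h ⟨x, hxy.1⟩) ⟨y, hxy.2⟩
  · exact propext ⟨fun hl => absurd (hL.2.2.2 x y hl) hxy,
      fun hl => absurd (hL'.2.2.2 x y hl) hxy⟩

def linearOrdersOn (W : Finset C) : Finset (C → C → Prop) :=
  (finite_setOf_isStrictLinearOrderOn W).toFinset

theorem mem_linearOrdersOn {W : Finset C} {L : C → C → Prop} :
    L ∈ linearOrdersOn W ↔ IsStrictLinearOrderOn W L :=
  (finite_setOf_isStrictLinearOrderOn W).mem_toFinset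

theorem GAProfile.finsum_eq_sum_linearOrdersOn (P : GAProfile C) (g : (C → C → Prop) → Prop) :
    (∑ᶠ L : C → C → Prop, if g L then P.count L else 0)
      = ∑ L ∈ linearOrdersOn P.cands, if g L then P.count L else 0 := by
  refine finsum_eq_finsetSum_of_support_subset _ fun L hL => ?_
  have hcount : P.count L ≠ 0 := fun h => hL (by simp [h])
  simpa [mem_linearOrdersOn] using P.count_supp L hcount

/-- Restriction to `Z` of ballot counts supported in `S`. It is linear, so it commutes with the
sums defining `𝔏_Y` and `𝔏_{Y,m}`. -/
def restrictCounts (S : Finset (C → C → Prop)) (Z : Finset C) :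
    ((C → C → Prop) → ℤ) →ₗ[ℤ] ((C → C → Prop) → ℤ) where
  toFun f L := ∑ L' ∈ S, if restrictRel Z L' = L then f L' else 0
  map_add' f g := by
    funext L
    simp only [Pi.add_apply, ← Finset.sum_add_distrib, ite_add_ite, add_zero]
  map_smul' k f := by
    funext L
    simp only [Pi.smul_apply, smul_eq_mul, RingHom.id_apply, Finset.mul_sum, mul_ite, mul_zero]

theorem GAProfile.cands_restrict (P : GAProfile C) (Z : Finset C) (hZ : Z.Nonempty)
    (hsub : Z ⊆ P.cands) : (P.restrict Z hZ hsub).cands = Z := rfl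

theorem GAProfile.count_restrict (P : GAProfile C) (Z : Finset C) (hZ : Z.Nonempty)
    (hsub : Z ⊆ P.cands) :
    (P.restrict Z hZ hsub).count = restrictCounts (linearOrdersOn P.cands) Z P.count := by
  funext L
  exact P.finsum_eq_sum_linearOrdersOn (fun L' => restrictRel Z L' = L)

theorem sum_ite_restrictCounts {V Z : Finset C} (hZ : Z ⊆ V) (p : (C → C → Prop) → Prop)
    (f : (C → C → Prop) → ℤ) :
    ∑ L ∈ linearOrdersOn Z, (if p L then restrictCounts (linearOrdersOn V) Z f L else 0)
      = ∑ L' ∈ linearOrdersOn V, if p (restrictRel Z L') then f L' else 0 := by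
  simp only [restrictCounts, LinearMap.coe_mk, AddHom.coe_mk, Finset.ite_sum_zero]
  rw [Finset.sum_comm]
  refine Finset.sum_congr rfl fun L' hL' => ?_
  have hmem : restrictRel Z L' ∈ linearOrdersOn Z :=
    mem_linearOrdersOn.mpr ((mem_linearOrdersOn.mp hL').restrict hZ)
  rw [← Finset.sum_filter, Finset.sum_ite_eq]
  simp only [Finset.mem_filter, hmem, true_and]

theorem restrictRel_restrictRel {W₁ W₂ : Finset C} (h : W₂ ⊆ W₁) (L : C → C → Prop) :
    restrictRel W₂ (restrictRel W₁ L) = restrictRel W₂ L := by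
  funext x y
  simp only [restrictRel, eq_iff_iff]
  exact ⟨fun ⟨⟨hL, _⟩, hx, hy⟩ => ⟨hL, hx, hy⟩, fun ⟨hL, hx, hy⟩ => ⟨⟨hL, h hx, h hy⟩, hx, hy⟩⟩

theorem restrictCounts_restrictCounts {V W₁ W₂ : Finset C} (h₁ : W₁ ⊆ V) (h₂ : W₂ ⊆ W₁)
    (f : (C → C → Prop) → ℤ) :
    restrictCounts (linearOrdersOn W₁) W₂ (restrictCounts (linearOrdersOn V) W₁ f)
      = restrictCounts (linearOrdersOn V) W₂ f := by
  funext L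
  refine (sum_ite_restrictCounts h₁ (fun L'' => restrictRel W₂ L'' = L) f).trans ?_
  simp only [restrictRel_restrictRel h₂]
  rfl

theorem GAProfile.restrict_restrict (P : GAProfile C) {W₁ W₂ : Finset C}
    (h₁ : W₁.Nonempty) (h₂ : W₂.Nonempty) (s₁ : W₁ ⊆ P.cands) (s₂ : W₂ ⊆ W₁) :
    (P.restrict W₁ h₁ s₁).restrict W₂ h₂ s₂ = P.restrict W₂ h₂ (s₂.trans s₁) := by
  refine GAProfile.ext rfl ((count_restrict _ _ _ _).trans ?_)
  rw [count_restrict, count_restrict]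
  exact restrictCounts_restrictCounts s₁ s₂ P.count

theorem GAProfile.margin_eq_sum (P : GAProfile C) (x y : C) :
    P.margin x y = (∑ L ∈ linearOrdersOn P.cands, if L x y then P.count L else 0)
      - ∑ L ∈ linearOrdersOn P.cands, if L y x then P.count L else 0 := by
  rw [margin, finsum_eq_sum_linearOrdersOn, finsum_eq_sum_linearOrdersOn]

theorem GAProfile.margin_restrict (P : GAProfile C) {Z : Finset C} (hZ : Z.Nonempty)
    (hsub : Z ⊆ P.cands) {x y : C} (hx : x ∈ Z) (hy : y ∈ Z) :
    (P.restrict Z hZ hsub).margin x y = P.margin x y := by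
  have hrestrict : ∀ {u v}, u ∈ Z → v ∈ Z → ∀ L : C → C → Prop,
      restrictRel Z L u v ↔ L u v := fun hu hv L => ⟨fun h => h.1, fun h => ⟨h, hu, hv⟩⟩
  rw [margin_eq_sum, margin_eq_sum, count_restrict, cands_restrict,
    sum_ite_restrictCounts hsub (fun L => L x y), sum_ite_restrictCounts hsub (fun L => L y x)]
  simp only [hrestrict hx hy, hrestrict hy hx]

def GAProfile.IsRestrictionOf (P Q : GAProfile C) : Prop :=
  ∃ h : P.cands ⊆ Q.cands, P = Q.restrict P.cands P.cands_nonempty h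

theorem Finset.image_swap_eq_self {Y : Finset C} {a b : C} (ha : a ∈ Y) (hb : b ∈ Y) :
    Y.image (Equiv.swap a b) = Y := by
  have hsupp : {x | Equiv.swap a b x ≠ x} ⊆ Y := fun x hx => by
    rcases (Equiv.swap_apply_ne_self_iff.mp hx).2 with rfl | rfl <;> assumption
  simpa [Finset.map_eq_image] using Finset.map_perm hsupp

theorem isStrictLinearOrderOn_swapRel_iff {Y : Finset C} {a b : C} (ha : a ∈ Y) (hb : b ∈ Y)
    (L : C → C → Prop) :
    IsStrictLinearOrderOn Y (swapRel a b L) ↔ IsStrictLinearOrderOn Y L := by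
  constructor <;> intro h
  · simpa only [Finset.image_swap_eq_self ha hb] using h.of_swapRel
  · simpa only [Finset.image_swap_eq_self ha hb] using h.swapRel_mem a b

theorem swapRel_swapRel (a b : C) (L : C → C → Prop) : swapRel a b (swapRel a b L) = L := by
  funext x y
  simp only [swapRel, Equiv.swap_apply_self]

theorem firstSecond_swapRel_iff {Y : Finset C} {a b : C} (ha : a ∈ Y) (hb : b ∈ Y)
    (L : C → C → Prop) :
    firstSecond Y a b (swapRel a b L) ↔ firstSecond Y b a L := by
  simp only [firstSecond, swapRel, Equiv.swap_apply_def]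
  grind

theorem blockCount_swapRel {Y : Finset C} {a b : C} (ha : a ∈ Y) (hb : b ∈ Y)
    (L : C → C → Prop) :
    blockCount Y a b (swapRel a b L) = blockCount Y b a L :=
  if_congr (and_congr (isStrictLinearOrderOn_swapRel_iff ha hb L)
    (firstSecond_swapRel_iff ha hb L)) rfl rfl

/-- `a` and `b` are adjacent at the top of `L` and `Z` contains at most one of them, so swapping
them does not change the order on `Z`. -/
theorem restrictRel_swapRel_of_firstSecond {Y Z : Finset C} {a b : C} {L : C → C → Prop}
    (hZY : Z ⊆ Y) (hab : ¬ (a ∈ Z ∧ b ∈ Z)) (hL : IsStrictLinearOrderOn Y L)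
    (hfs : firstSecond Y a b L) :
    restrictRel Z (swapRel a b L) = restrictRel Z L := by
  obtain ⟨hirr, htrans, -, -⟩ := hL
  obtain ⟨ha, hb⟩ := hfs
  have hasymm : ∀ u v, L u v → ¬ L v u := fun u v h h' => hirr u (htrans u v u h h')
  funext x y
  simp only [restrictRel, swapRel, Equiv.swap_apply_def, eq_iff_iff]
  grind

/-- Swapping `a` and `b` matches the `ab`-block with the `ba`-block ballot by ballot, without
changing restrictions to `Z`. -/
theorem restrictCounts_blockCount_comm {Y Z : Finset C} {a b : C} (hZY : Z ⊆ Y)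
    (ha : a ∈ Y) (hb : b ∈ Y) (hab : ¬ (a ∈ Z ∧ b ∈ Z)) :
    restrictCounts (linearOrdersOn Y) Z (blockCount Y a b)
      = restrictCounts (linearOrdersOn Y) Z (blockCount Y b a) := by
  have hmaps : ∀ L ∈ linearOrdersOn Y, swapRel a b L ∈ linearOrdersOn Y := fun L hL =>
    mem_linearOrdersOn.mpr ((isStrictLinearOrderOn_swapRel_iff ha hb L).mpr
      (mem_linearOrdersOn.mp hL))
  funext L₀
  refine Finset.sum_nbij' (swapRel a b) (swapRel a b) hmaps hmaps
    (fun L _ => swapRel_swapRel a b L) (fun L _ => swapRel_swapRel a b L) fun L _ => ?_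
  have hcount : blockCount Y b a (swapRel a b L) = blockCount Y a b L := by
    rw [← blockCount_swapRel ha hb, swapRel_swapRel]
  rw [hcount]
  by_cases hblock : IsStrictLinearOrderOn Y L ∧ firstSecond Y a b L
  · rw [restrictRel_swapRel_of_firstSecond hZY hab hblock.1 hblock.2]
  · simp only [blockCount, if_neg hblock, ite_self]

theorem restrictCounts_sum_blockCount_sub {Y Z : Finset C} (hZY : Z ⊆ Y) {E : Finset (C × C)}
    (hE : E ⊆ Y ×ˢ Y) (k : C × C → ℤ) :
    restrictCounts (linearOrdersOn Y) Z
        (∑ p ∈ E, k p • (blockCount Y p.1 p.2 - blockCount Y p.2 p.1))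
      = restrictCounts (linearOrdersOn Y) Z
        (∑ p ∈ E with p.1 ∈ Z ∧ p.2 ∈ Z, k p • (blockCount Y p.1 p.2 - blockCount Y p.2 p.1)) := by
  simp only [map_sum]
  refine (Finset.sum_filter_of_ne fun p hp hne => ?_).symm
  by_contra hout
  apply hne
  rw [map_smul, map_sub, restrictCounts_blockCount_comm hZY (Finset.mem_product.mp (hE hp)).1
    (Finset.mem_product.mp (hE hp)).2 hout,
    sub_self, smul_zero]

theorem filter_edge_pairs_eq {V V' : Finset C} {e e' : C → C → Prop} (hV : V' ⊆ V)
    (he : ∀ x ∈ V', ∀ y ∈ V', e' x y ↔ e x y) :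
    {p ∈ {p ∈ V ×ˢ V | e p.1 p.2} | p.1 ∈ V' ∧ p.2 ∈ V'} = {p ∈ V' ×ˢ V' | e' p.1 p.2} := by
  ext ⟨x, y⟩
  simp only [Finset.mem_filter, Finset.mem_product]
  grind

-- The coefficient `1` puts `𝔏_Y(T)` in the shape of `restrictCounts_sum_blockCount_sub`.
theorem bigLCount_eq (Y : Finset C) (T : WeakTournament C) :
    bigLCount Y T = allOrdersCount Y
      + ∑ p ∈ T.verts ×ˢ T.verts with T.edge p.1 p.2,
          (1 : ℤ) • (blockCount Y p.1 p.2 - blockCount Y p.2 p.1) := by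
  funext L
  simp only [bigLCount, Finset.sum_filter, Pi.add_apply, Finset.sum_apply, ite_apply,
    Pi.zero_apply, Pi.sub_apply, one_smul]

theorem bigLWCount_eq (Y : Finset C) (m : ℕ) (T : WeightedWeakTournament C) :
    bigLWCount Y m T = (m : ℤ) • allOrdersCount Y
      + ∑ p ∈ T.verts ×ˢ T.verts with T.edge p.1 p.2,
          (T.wt p.1 p.2 / psi Y) • (blockCount Y p.1 p.2 - blockCount Y p.2 p.1) := by
  funext L
  simp only [bigLWCount, Finset.sum_filter, Pi.add_apply, Finset.sum_apply, ite_apply,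
    Pi.zero_apply, Pi.smul_apply, Pi.sub_apply, smul_eq_mul]

theorem GAProfile.restrict_eq_restrict_restrict {P Q : GAProfile C} {Z Z' : Finset C}
    (hZ : Z.Nonempty) (hZ' : Z'.Nonempty) (hQ : Z ⊆ Q.cands) (hP : Z' ⊆ P.cands) (hZZ' : Z' ⊆ Z)
    (hcount : restrictCounts (linearOrdersOn P.cands) Z' P.count
      = restrictCounts (linearOrdersOn Q.cands) Z' Q.count) :
    P.restrict Z' hZ' hP = (Q.restrict Z hZ hQ).restrict Z' hZ' hZZ' := by
  rw [restrict_restrict]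
  exact GAProfile.ext rfl (by rw [count_restrict, count_restrict, hcount])

theorem restrictCounts_bigLCount {Y : Finset C} {T T' : WeakTournament C} (hT : T.verts ⊆ Y)
    (hsub : T'.verts ⊆ T.verts)
    (hedge : ∀ x ∈ T'.verts, ∀ y ∈ T'.verts, T'.edge x y ↔ T.edge x y) :
    restrictCounts (linearOrdersOn Y) T'.verts (bigLCount Y T')
      = restrictCounts (linearOrdersOn Y) T'.verts (bigLCount Y T) := by
  rw [bigLCount_eq, bigLCount_eq, map_add, map_add,
    restrictCounts_sum_blockCount_sub (hsub.trans hT)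
      ((Finset.filter_subset _ _).trans (Finset.product_subset_product hT hT)),
    filter_edge_pairs_eq hsub hedge]

theorem profileRep_isRestrictionOf {Y : Finset C} {T T' : WeakTournament C}
    (hT : T.verts ⊆ Y) (hT' : T'.verts ⊆ Y) (hsub : T'.verts ⊆ T.verts)
    (hedge : ∀ x ∈ T'.verts, ∀ y ∈ T'.verts, T'.edge x y ↔ T.edge x y) :
    (profileRep Y T' hT').IsRestrictionOf (profileRep Y T hT) :=
  ⟨hsub, GAProfile.restrict_eq_restrict_restrict (P := bigL Y T' hT') (Q := bigL Y T hT)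
    _ _ _ _ _ (restrictCounts_bigLCount hT hsub hedge)⟩

theorem restrictCounts_bigLWCount {Y : Finset C} (m : ℕ) {T T' : WeightedWeakTournament C}
    (hT : T.verts ⊆ Y) (hsub : T'.verts ⊆ T.verts)
    (hedge : ∀ x ∈ T'.verts, ∀ y ∈ T'.verts, T'.edge x y ↔ T.edge x y)
    (hwt : ∀ x ∈ T'.verts, ∀ y ∈ T'.verts, T.edge x y → T'.wt x y = T.wt x y) :
    restrictCounts (linearOrdersOn Y) T'.verts (bigLWCount Y m T')
      = restrictCounts (linearOrdersOn Y) T'.verts (bigLWCount Y m T) := by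
  rw [bigLWCount_eq, bigLWCount_eq, map_add, map_add,
    restrictCounts_sum_blockCount_sub (hsub.trans hT)
      ((Finset.filter_subset _ _).trans (Finset.product_subset_product hT hT)),
    filter_edge_pairs_eq hsub hedge]
  refine congrArg _ (congrArg _ (Finset.sum_congr rfl fun p hp => ?_))
  obtain ⟨hp, he'⟩ := Finset.mem_filter.mp hp
  obtain ⟨hx, hy⟩ := Finset.mem_product.mp hp
  rw [hwt p.1 hx p.2 hy ((hedge p.1 hx p.2 hy).mp he')]

theorem profileRepW_isRestrictionOf {Y : Finset C} (m : ℕ) {T T' : WeightedWeakTournament C}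
    (hT : T.verts ⊆ Y) (hT' : T'.verts ⊆ Y) (hsub : T'.verts ⊆ T.verts)
    (hedge : ∀ x ∈ T'.verts, ∀ y ∈ T'.verts, T'.edge x y ↔ T.edge x y)
    (hwt : ∀ x ∈ T'.verts, ∀ y ∈ T'.verts, T.edge x y → T'.wt x y = T.wt x y) :
    (profileRepW Y m T' hT').IsRestrictionOf (profileRepW Y m T hT) :=
  ⟨hsub, GAProfile.restrict_eq_restrict_restrict (P := bigLW Y m T' hT') (Q := bigLW Y m T hT)
    _ _ _ _ _ (restrictCounts_bigLWCount m hT hsub hedge hwt)⟩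

namespace GAProfile.IsRestrictionOf

variable {P Q : GAProfile C}

theorem margin_eq (hPQ : P.IsRestrictionOf Q) {x y : C} (hx : x ∈ P.cands) (hy : y ∈ P.cands) :
    P.margin x y = Q.margin x y := by
  obtain ⟨hsub, hPQ⟩ := hPQ
  have h := Q.margin_restrict P.cands_nonempty hsub hx hy
  rwa [← hPQ] at h

theorem maj_edge_iff (hPQ : P.IsRestrictionOf Q) {x y : C} (hx : x ∈ P.cands)
    (hy : y ∈ P.cands) : P.maj.edge x y ↔ Q.maj.edge x y := by
  simp only [maj, hPQ.margin_eq hx hy, hx, hy, hPQ.1 hx, hPQ.1 hy]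

theorem profileRep_maj {Y : Finset C} (hPQ : P.IsRestrictionOf Q) (hP : P.maj.verts ⊆ Y)
    (hQ : Q.maj.verts ⊆ Y) : (profileRep Y P.maj hP).IsRestrictionOf (profileRep Y Q.maj hQ) :=
  profileRep_isRestrictionOf hQ hP hPQ.1 fun _ hx _ hy => hPQ.maj_edge_iff hx hy

theorem profileRepW_scale_marg {Y : Finset C} (m : ℕ) (hPQ : P.IsRestrictionOf Q)
    (hP : (P.marg.scale (psi Y) (psi_pos Y)).verts ⊆ Y)
    (hQ : (Q.marg.scale (psi Y) (psi_pos Y)).verts ⊆ Y) :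
    (profileRepW Y m (P.marg.scale (psi Y) (psi_pos Y)) hP).IsRestrictionOf
      (profileRepW Y m (Q.marg.scale (psi Y) (psi_pos Y)) hQ) := by
  refine profileRepW_isRestrictionOf m hQ hP hPQ.1 (fun _ hx _ hy => hPQ.maj_edge_iff hx hy)
    fun x (hx : x ∈ P.cands) y (hy : y ∈ P.cands) _ => ?_
  simp only [WeightedWeakTournament.scale, marg, hPQ.margin_eq hx hy, hx, hy, hPQ.1 hx, hPQ.1 hy]

end GAProfile.IsRestrictionOf

theorem AnonVotingMethod.Satisfies.of_factor {n : ℕ}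
    {Ax : Set (Fin n → GAProfile C × Finset C)} {F G : AnonVotingMethod C}
    (hF : F.Satisfies Ax) (hVC : IsVariableCandidateAx Ax) (rep : GAProfile C → GAProfile C)
    (hdom : ∀ P ∈ G.dom, rep P ∈ F.dom) (hwinners : ∀ P ∈ G.dom, G.winners P = F.winners (rep P))
    (hcands : ∀ P ∈ G.dom, (rep P).cands = P.cands)
    (hrestrict : ∀ P ∈ G.dom, ∀ Q ∈ G.dom, P.IsRestrictionOf Q → (rep P).IsRestrictionOf (rep Q)) :
    G.Satisfies Ax := by
  intro f hf
  refine hVC (fun i => (f i).1) (fun i => rep (f i).1) (fun i => (hcands _ (hf i).1).symm)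
    (fun i j hsub hPQ _ => (hrestrict _ (hf i).1 _ (hf j).1 ⟨hsub, hPQ⟩).2) (fun i => (f i).2)
    (fun i => (hf i).2 ▸ G.winners_sub _ (hf i).1)
    (hF _ fun i => ⟨hdom _ (hf i).1, (hf i).2.trans (hwinners _ (hf i).1)⟩)

theorem majProj_satisfies {n : ℕ} {Ax : Set (Fin n → GAProfile C × Finset C)}
    {F : AnonVotingMethod C} (hF : F.Satisfies Ax) (hVC : IsVariableCandidateAx Ax)
    (Y : Finset C) : (majProj F Y).Satisfies Ax := by
  refine hF.of_factor hVC (fun P => if h : P.maj.verts ⊆ Y then profileRep Y P.maj h else P)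
    ?_ ?_ ?_ ?_
  · rintro P ⟨-, hP, hdom⟩
    rwa [dif_pos hP]
  · rintro P ⟨-, hP, -⟩
    rw [dif_pos hP]
    exact dif_pos hP
  · rintro P ⟨-, hP, -⟩
    rw [dif_pos hP]
    rfl
  · rintro P ⟨-, hP, -⟩ Q ⟨-, hQ, -⟩ hPQ
    simp only [dif_pos hP, dif_pos hQ]
    exact hPQ.profileRep_maj hP hQ

theorem pairProj_satisfies {n : ℕ} {Ax : Set (Fin n → GAProfile C × Finset C)}
    {F : AnonVotingMethod C} (hF : F.Satisfies Ax) (hVC : IsVariableCandidateAx Ax)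
    (Y : Finset C) (m : ℕ) : (pairProj F Y m).Satisfies Ax := by
  refine hF.of_factor hVC (fun P => if h : (P.marg.scale (psi Y) (psi_pos Y)).verts ⊆ Y then
      profileRepW Y m (P.marg.scale (psi Y) (psi_pos Y)) h else P) ?_ ?_ ?_ ?_
  · rintro P ⟨-, -, hP, hdom⟩
    rwa [dif_pos hP]
  · rintro P ⟨-, -, hP, -⟩
    rw [dif_pos hP]
    exact dif_pos hP
  · rintro P ⟨-, -, hP, -⟩
    rw [dif_pos hP]
    rfl
  · rintro P ⟨-, -, hP, -⟩ Q ⟨-, -, hQ, -⟩ hPQ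
    simp only [dif_pos hP, dif_pos hQ]
    exact hPQ.profileRepW_scale_marg m hP hQ

end ProjectionsOfVariableCandidateAxioms

theorem projections_preserve_variable_candidate_axioms_general (C : Type)
    (F : AnonVotingMethod C) (n : ℕ) (Ax : Set (Fin n → GAProfile C × Finset C))
    (hVC : IsVariableCandidateAx Ax) (hsat : F.Satisfies Ax)
    (Y : Finset C) (m : ℕ) :
    (majProj F Y).Satisfies Ax ∧ (pairProj F Y m).Satisfies Ax :=
  ⟨majProj_satisfies hsat hVC Y, pairProj_satisfies hsat hVC Y m⟩

/-- Let `F` be an anonymous voting method satisfying a variable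
candidate universal axiom `Ax`. Then for any finite `Y ⊆ 𝒳` and `m ∈ ℤ⁺`, the
majoritarian projection `F_{maj,Y}` and the pairwise projection `F_{pair,Y,m}`
satisfy `Ax`. -/
theorem projections_preserve_variable_candidate_axioms (C : Type) [Infinite C]
    (F : AnonVotingMethod C) (n : ℕ) (Ax : Set (Fin n → GAProfile C × Finset C))
    (hAx : ∀ f ∈ Ax, ∀ i, (f i).2 ⊆ (f i).1.cands)
    (hVC : IsVariableCandidateAx Ax) (hsat : F.Satisfies Ax)
    (Y : Finset C) (m : ℕ) (hm : 0 < m) :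
    (majProj F Y).Satisfies Ax ∧ (pairProj F Y m).Satisfies Ax :=
  projections_preserve_variable_candidate_axioms_general C F n Ax hVC hsat Y m
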